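/- Let T ∈ GL(n+1,ℝ) and a ∈ ℝ^{n+1} be nonzero with ‖T⁻¹(a)‖ < 1. Then the map T̄ₐ : Sⁿ → Sⁿ, T̄ₐ(x) = (a+T(x))/‖a+T(x)‖, is surjective: for every y ∈ Sⁿ there exists t₀ > 0 such that x = t₀T⁻¹(y) − T⁻¹(a) lies on the unit sphere and T̄ₐ(x) = y. -/

import Mathlib

/-- The "affine" map `x ↦ (a + T(x))/‖a + T(x)‖` induced on the unit sphere. -/
noncomputable def affAct {m : ℕ} (A : Matrix (Fin m) (Fin m) ℝ)
    (a x : EuclideanSpace ℝ (Fin m)) : EuclideanSpace ℝ (Fin m) :=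
  ‖a + Matrix.toEuclideanLin A x‖⁻¹ • (a + Matrix.toEuclideanLin A x)

/-! The ray `t ↦ t • T⁻¹ y - T⁻¹ a` starts inside the unit sphere (at `t = 0` its norm is
`‖T⁻¹ a‖ < 1`) and has norm tending to infinity, so by the intermediate value theorem it crosses
the sphere at some `t₀ > 0`. The image of that point under `x ↦ a + T x` is `t₀ • y`, whose
normalization is `y`. -/

theorem Matrix.toEuclideanLin_coe_apply_inv_apply {𝕜 ι : Type*} [RCLike 𝕜] [Fintype ι]
    [DecidableEq ι] (T : GL ι 𝕜) (x : EuclideanSpace 𝕜 ι) :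
    Matrix.toEuclideanLin (T : Matrix ι ι 𝕜)
      (Matrix.toEuclideanLin ((T⁻¹ : GL ι 𝕜) : Matrix ι ι 𝕜) x) = x := by
  simp [Matrix.toLpLin_apply, Matrix.mulVec_mulVec]

theorem exists_pos_norm_smul_sub_eq {E : Type*} [NormedAddCommGroup E] [NormedSpace ℝ E]
    {v w : E} {r : ℝ} (hv : v ≠ 0) (hw : ‖w‖ < r) : ∃ t : ℝ, 0 < t ∧ ‖t • v - w‖ = r := by
  have hv₀ : 0 < ‖v‖ := norm_pos_iff.mpr hv
  set t₁ := (r + ‖w‖) / ‖v‖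
  have ht₁ : 0 ≤ t₁ := div_nonneg (by linarith [norm_nonneg w]) hv₀.le
  have h_start : ‖(0 : ℝ) • v - w‖ ≤ r := by simpa using hw.le
  have h_end : r ≤ ‖t₁ • v - w‖ :=
    calc r = ‖t₁ • v‖ - ‖w‖ := by
            rw [norm_smul, Real.norm_of_nonneg ht₁, div_mul_cancel₀ _ hv₀.ne']; ring
      _ ≤ ‖t₁ • v - w‖ := norm_sub_norm_le _ _
  obtain ⟨t, ht, hnorm⟩ := 
    intermediate_value_Icc (f := fun t : ℝ ↦ ‖t • v - w‖) ht₁ (by fun_prop) ⟨h_start, h_end⟩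
  refine ⟨t, ht.1.lt_of_ne ?_, hnorm⟩
  rintro rfl
  simp only [zero_smul, zero_sub, norm_neg] at hnorm
  exact hw.ne hnorm

theorem affAct_eq_of_toEuclideanLin_apply_eq {m : ℕ} {A : Matrix (Fin m) (Fin m) ℝ}
    {a x y : EuclideanSpace ℝ (Fin m)} {t : ℝ} (h : Matrix.toEuclideanLin A x = t • y - a)
    (ht : 0 < t) (hy : ‖y‖ = 1) : affAct A a x = y := by
  rw [affAct, h, add_sub_cancel, norm_smul, Real.norm_of_nonneg ht.le, hy, mul_one, smul_smul,
    inv_mul_cancel₀ ht.ne', one_smul]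

theorem stmt10_general (n : ℕ) (T : GL (Fin (n + 1)) ℝ) (a : EuclideanSpace ℝ (Fin (n + 1)))
    (hlt : ‖Matrix.toEuclideanLin ((T⁻¹ : GL (Fin (n + 1)) ℝ) : Matrix (Fin (n + 1)) (Fin (n + 1)) ℝ) a‖ < 1) :
    ∀ y : EuclideanSpace ℝ (Fin (n + 1)), ‖y‖ = 1 →
      ∃ t₀ : ℝ, 0 < t₀ ∧
        ‖t₀ • Matrix.toEuclideanLin ((T⁻¹ : GL (Fin (n + 1)) ℝ) : Matrix (Fin (n + 1)) (Fin (n + 1)) ℝ) y -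
          Matrix.toEuclideanLin ((T⁻¹ : GL (Fin (n + 1)) ℝ) : Matrix (Fin (n + 1)) (Fin (n + 1)) ℝ) a‖ = 1 ∧
        affAct (T : Matrix (Fin (n + 1)) (Fin (n + 1)) ℝ) a
          (t₀ • Matrix.toEuclideanLin ((T⁻¹ : GL (Fin (n + 1)) ℝ) : Matrix (Fin (n + 1)) (Fin (n + 1)) ℝ) y -
            Matrix.toEuclideanLin ((T⁻¹ : GL (Fin (n + 1)) ℝ) : Matrix (Fin (n + 1)) (Fin (n + 1)) ℝ) a) = y := by
  intro y hy
  have hT := Matrix.toEuclideanLin_coe_apply_inv_apply T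
  have hy₀ : Matrix.toEuclideanLin ((T⁻¹ : GL (Fin (n + 1)) ℝ) : Matrix (Fin (n + 1)) (Fin (n + 1)) ℝ) y ≠ 0 := by
    intro h
    have hy' := hT y
    rw [h, map_zero] at hy'
    simp [← hy'] at hy
  obtain ⟨t, ht, hnorm⟩ := exists_pos_norm_smul_sub_eq hy₀ hlt
  refine ⟨t, ht, hnorm, affAct_eq_of_toEuclideanLin_apply_eq ?_ ht hy⟩
  rw [map_sub, map_smul, hT, hT]

theorem stmt10 (n : ℕ) (T : GL (Fin (n + 1)) ℝ) (a : EuclideanSpace ℝ (Fin (n + 1)))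
    (ha : a ≠ 0)
    (hlt : ‖Matrix.toEuclideanLin ((T⁻¹ : GL (Fin (n + 1)) ℝ) : Matrix (Fin (n + 1)) (Fin (n + 1)) ℝ) a‖ < 1) :
    ∀ y : EuclideanSpace ℝ (Fin (n + 1)), ‖y‖ = 1 →
      ∃ t₀ : ℝ, 0 < t₀ ∧
        ‖t₀ • Matrix.toEuclideanLin ((T⁻¹ : GL (Fin (n + 1)) ℝ) : Matrix (Fin (n + 1)) (Fin (n + 1)) ℝ) y -
          Matrix.toEuclideanLin ((T⁻¹ : GL (Fin (n + 1)) ℝ) : Matrix (Fin (n + 1)) (Fin (n + 1)) ℝ) a‖ = 1 ∧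
        affAct (T : Matrix (Fin (n + 1)) (Fin (n + 1)) ℝ) a
          (t₀ • Matrix.toEuclideanLin ((T⁻¹ : GL (Fin (n + 1)) ℝ) : Matrix (Fin (n + 1)) (Fin (n + 1)) ℝ) y -
            Matrix.toEuclideanLin ((T⁻¹ : GL (Fin (n + 1)) ℝ) : Matrix (Fin (n + 1)) (Fin (n + 1)) ℝ) a) = y :=
  stmt10_general n T a hlt
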